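/- arXiv:2411.01609 — 10 statements merged into one kernel-verified Lean document; each statement's English description precedes it below -/
import Mathlib

section
/- For every natural number N with N ≥ 3, every natural number k with k ≤ N, every real number R with 0 ≤ R ≤ 1, and every real number θ, one has C(N,k) · ( R^(N−k)·(1−R)^k + R^k·(1−R)^(N−k) + 2·(Real.sqrt (R·(1−R)))^N·(−1)^(N−k)·cos θ ) < 2. -/
/-!
Write `p = √R`, `q = √(1 - R)`, `x = p^(N-k) q^k`, `y = p^k q^(N-k)`. Since
`√(R(1-R))^N = xy` and the phase factor is at most `1`, the expression is at most
`C(N,k) (x + y)^2`. If `k ≠ N - k`, then `C(N,k)(x^2 + y^2)` is the sum of two of the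
`N + 1 ≥ 4` terms of the binomial expansion of `(R + (1 - R))^N = 1`, hence `< 1` when
`0 < R < 1`, and `(x + y)^2 ≤ 2(x^2 + y^2)`; at `R ∈ {0, 1}` we have `xy = 0`. If `N = 2k`, then
`C(N,k)(x + y)^2 = 4 C(2k,k) (R(1-R))^k ≤ 4 C(2k,k) / 4^k`, which is `< 2` because
`2 C(2k,k) < 4^k` for `k ≥ 2`.
-/

open Finset

theorem Nat.two_mul_centralBinom_lt_four_pow {n : ℕ} (hn : 2 ≤ n) :
    2 * n.centralBinom < 4 ^ n := by
  induction n, hn using Nat.le_induction with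
  | base => decide
  | succ n _ ih =>
    have hrec := Nat.succ_mul_centralBinom_succ n
    refine Nat.lt_of_mul_lt_mul_left (a := n + 1) ?_
    rw [pow_succ]
    nlinarith

section BinomialSum

variable {x y : ℝ} {N : ℕ} {s : Finset ℕ}

theorem sum_pow_mul_pow_mul_choose_le_one (hx : 0 ≤ x) (hy : 0 ≤ y) (hxy : x + y = 1)
    (hs : s ⊆ range (N + 1)) :
    ∑ j ∈ s, x ^ j * y ^ (N - j) * N.choose j ≤ 1 := by
  calc ∑ j ∈ s, x ^ j * y ^ (N - j) * N.choose j
      ≤ ∑ j ∈ range (N + 1), x ^ j * y ^ (N - j) * N.choose j :=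
        sum_le_sum_of_subset_of_nonneg hs fun _ _ _ => by positivity
    _ = 1 := by rw [← add_pow, hxy, one_pow]

theorem sum_pow_mul_pow_mul_choose_lt_one (hx : 0 < x) (hy : 0 < y) (hxy : x + y = 1)
    (hs : s ⊂ range (N + 1)) :
    ∑ j ∈ s, x ^ j * y ^ (N - j) * N.choose j < 1 := by
  obtain ⟨i, hi, his⟩ := exists_of_ssubset hs
  have hiN : i ≤ N := Nat.lt_succ_iff.mp (mem_range.mp hi)
  calc ∑ j ∈ s, x ^ j * y ^ (N - j) * N.choose j
      < ∑ j ∈ range (N + 1), x ^ j * y ^ (N - j) * N.choose j := by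
        refine sum_lt_sum_of_subset hs.subset hi his ?_ fun _ _ _ => by positivity
        have := Nat.choose_pos hiN
        positivity
    _ = 1 := by rw [← add_pow, hxy, one_pow]

theorem choose_mul_add_eq_sum_pair {k : ℕ} (hk : k ≤ N) (hne : N - k ≠ k) :
    N.choose k * (x ^ (N - k) * y ^ k + x ^ k * y ^ (N - k)) =
      ∑ j ∈ {N - k, k}, x ^ j * y ^ (N - j) * N.choose j := by
  rw [sum_pair hne, Nat.choose_symm hk, Nat.sub_sub_self hk]
  ring

end BinomialSum

section Amplitudes

variable {p q : ℝ}

theorem choose_mul_sq_add_lt_two_of_ne {N k : ℕ} (hp : 0 ≤ p) (hq : 0 ≤ q)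
    (hpq : p ^ 2 + q ^ 2 = 1) (hN : 2 ≤ N) (hk : k ≤ N) (hne : N - k ≠ k) :
    N.choose k * (p ^ (N - k) * q ^ k + p ^ k * q ^ (N - k)) ^ 2 < 2 := by
  set a := p ^ (N - k) * q ^ k
  set b := p ^ k * q ^ (N - k)
  have hC : (0 : ℝ) ≤ N.choose k := Nat.cast_nonneg _
  have hsq : N.choose k * (a ^ 2 + b ^ 2) =
      ∑ j ∈ {N - k, k}, (p ^ 2) ^ j * (q ^ 2) ^ (N - j) * N.choose j := by
    rw [← choose_mul_add_eq_sum_pair hk hne]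
    ring
  have hsub : ({N - k, k} : Finset ℕ) ⊆ range (N + 1) := by
    intro j hj
    simp only [mem_insert, mem_singleton] at hj
    rw [mem_range]
    omega
  have hab : a * b = (p * q) ^ N := by
    rw [mul_pow, ← Nat.sub_add_cancel hk]
    simp only [a, b, pow_add]
    ring
  rcases (mul_nonneg hp hq).eq_or_lt with hpq0 | hpq0
  · have hab0 : a * b = 0 := by rw [hab, ← hpq0, zero_pow (by omega)]
    calc N.choose k * (a + b) ^ 2 = N.choose k * (a ^ 2 + b ^ 2) := by
          rw [add_sq, mul_assoc 2, hab0]; ring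
      _ ≤ 1 := hsq ▸ sum_pow_mul_pow_mul_choose_le_one (by positivity) (by positivity) hpq hsub
      _ < 2 := one_lt_two
  · have hp' : 0 < p := lt_of_le_of_ne hp fun h => by simp [← h] at hpq0
    have hq' : 0 < q := lt_of_le_of_ne hq fun h => by simp [← h] at hpq0
    have hcard : ({N - k, k} : Finset ℕ) ⊂ range (N + 1) := by
      refine ssubset_of_subset_of_ne hsub fun h => ?_
      have := (card_le_two (a := N - k) (b := k)).trans_eq' (congrArg card h)
      simp only [card_range] at this
      omega
    calc N.choose k * (a + b) ^ 2 ≤ 2 * (N.choose k * (a ^ 2 + b ^ 2)) := by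
          nlinarith [mul_nonneg hC (sq_nonneg (a - b))]
      _ < 2 * 1 := by
          rw [hsq]
          gcongr
          exact sum_pow_mul_pow_mul_choose_lt_one (by positivity) (by positivity) hpq hcard
      _ = 2 := mul_one 2

theorem centralBinom_mul_sq_add_lt_two {k : ℕ} (hk : 2 ≤ k) (hpq : p ^ 2 + q ^ 2 = 1) :
    k.centralBinom * (p ^ k * q ^ k + p ^ k * q ^ k) ^ 2 < 2 := by
  have hC : (2 * k.centralBinom : ℝ) < 4 ^ k := by
    exact_mod_cast Nat.two_mul_centralBinom_lt_four_pow hk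
  -- AM-GM: `4 p²q² ≤ (p² + q²)² = 1`
  have hAMGM : (4 * (p * q) ^ 2) ^ k ≤ 1 :=
    pow_le_one₀ (by positivity) (by nlinarith [sq_nonneg (p ^ 2 - q ^ 2)])
  have h4 : (0 : ℝ) < 4 ^ k := by positivity
  calc (k.centralBinom : ℝ) * (p ^ k * q ^ k + p ^ k * q ^ k) ^ 2
      = 4 * (k.centralBinom : ℝ) * (4 * (p * q) ^ 2) ^ k / 4 ^ k := by
        field_simp
        ring
    _ ≤ 4 * (k.centralBinom : ℝ) * 1 / 4 ^ k := by gcongr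
    _ < 2 := by
        rw [div_lt_iff₀ h4]
        linarith

theorem choose_mul_sq_add_lt_two {N k : ℕ} (hp : 0 ≤ p) (hq : 0 ≤ q)
    (hpq : p ^ 2 + q ^ 2 = 1) (hN : 3 ≤ N) (hk : k ≤ N) :
    N.choose k * (p ^ (N - k) * q ^ k + p ^ k * q ^ (N - k)) ^ 2 < 2 := by
  by_cases hne : N - k = k
  · obtain rfl : N = 2 * k := by omega
    rw [hne, ← Nat.centralBinom_eq_two_mul_choose]
    exact centralBinom_mul_sq_add_lt_two (by omega) hpq
  · exact choose_mul_sq_add_lt_two_of_ne hp hq hpq (by omega) hk hne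

theorem mul_add_add_mul_le_mul_sq_add {C w : ℝ} {m n : ℕ} (hC : 0 ≤ C) (hp : 0 ≤ p)
    (hq : 0 ≤ q) (hw : w ≤ 1) :
    C * ((p ^ 2) ^ m * (q ^ 2) ^ n + (p ^ 2) ^ n * (q ^ 2) ^ m + 2 * (p * q) ^ (m + n) * w) ≤
      C * (p ^ m * q ^ n + p ^ n * q ^ m) ^ 2 := by
  have hpqmn : 0 ≤ (p * q) ^ (m + n) := by positivity
  have hexp : (p ^ m * q ^ n + p ^ n * q ^ m) ^ 2 =
      (p ^ 2) ^ m * (q ^ 2) ^ n + (p ^ 2) ^ n * (q ^ 2) ^ m + 2 * (p * q) ^ (m + n) := by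
    ring
  rw [hexp]
  nlinarith [mul_le_mul_of_nonneg_left hw (mul_nonneg hC hpqmn)]

end Amplitudes

/-- For every `N ≥ 3`, `k ≤ N`, `0 ≤ R ≤ 1` and real `θ`, the NOON-state product
condition expression is strictly below `2`. -/
theorem noon_expression_lt_two (N k : ℕ) (hN : 3 ≤ N) (hk : k ≤ N)
    (R θ : ℝ) (hR0 : 0 ≤ R) (hR1 : R ≤ 1) :
    (N.choose k : ℝ) *
      (R ^ (N - k) * (1 - R) ^ k + R ^ k * (1 - R) ^ (N - k) +
        2 * (Real.sqrt (R * (1 - R))) ^ N * (-1 : ℝ) ^ (N - k) * Real.cos θ) < 2 := by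
  set p := Real.sqrt R
  set q := Real.sqrt (1 - R)
  have hR : R = p ^ 2 := (Real.sq_sqrt hR0).symm
  have hR' : 1 - R = q ^ 2 := (Real.sq_sqrt (sub_nonneg.mpr hR1)).symm
  have hphase : (-1 : ℝ) ^ (N - k) * Real.cos θ ≤ 1 := by
    refine le_of_abs_le ?_
    simpa [abs_mul] using Real.abs_cos_le_one θ
  calc (N.choose k : ℝ) *
        (R ^ (N - k) * (1 - R) ^ k + R ^ k * (1 - R) ^ (N - k) +
          2 * (Real.sqrt (R * (1 - R))) ^ N * (-1 : ℝ) ^ (N - k) * Real.cos θ)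
      = N.choose k * ((p ^ 2) ^ (N - k) * (q ^ 2) ^ k + (p ^ 2) ^ k * (q ^ 2) ^ (N - k) +
          2 * (p * q) ^ (N - k + k) * ((-1 : ℝ) ^ (N - k) * Real.cos θ)) := by
        rw [Real.sqrt_mul hR0, Nat.sub_add_cancel hk, ← hR, ← hR']
        ring
    _ ≤ N.choose k * (p ^ (N - k) * q ^ k + p ^ k * q ^ (N - k)) ^ 2 :=
        mul_add_add_mul_le_mul_sq_add (Nat.cast_nonneg _) (Real.sqrt_nonneg _)
          (Real.sqrt_nonneg _) hphase
    _ < 2 := choose_mul_sq_add_lt_two (Real.sqrt_nonneg _) (Real.sqrt_nonneg _)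
        (by rw [← hR, ← hR']; ring) hN hk
end

section
/- Let q : ℂ × ℂ → ℂ be a continuous function. If there exist functions f, g : ℂ → ℂ such that for all x, y ∈ ℂ one has Complex.exp (q (x, y)) = f x · g y, then for all x, y ∈ ℂ one has q (x, y) + q (0, 0) − q (x, 0) − q (0, y) = 0. -/
/-!
Write `H(x, y) = q(x, y) + q(0, 0) - q(x, 0) - q(0, y)`. The factorization gives
`exp (H (x, y)) = f x g y · f 0 g 0 / (f x g 0 · f 0 g y) = 1`, so the continuous function `H`
takes values in the discrete set `2πiℤ`. Since `ℂ × ℂ` is connected, `H` is constant, equal to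
`H (0, 0) = 0`.
-/

open Complex Real

theorem Complex.setOf_exp_eq_one : {z : ℂ | exp z = 1} = AddSubgroup.zmultiples (2 * π * I) := by
  ext z
  simp [exp_eq_one_iff, AddSubgroup.mem_zmultiples_iff, eq_comm]

theorem Complex.isDiscrete_setOf_exp_eq_one : IsDiscrete {z : ℂ | exp z = 1} := by
  rw [setOf_exp_eq_one, isDiscrete_iff_discreteTopology]
  exact NormedSpace.discreteTopology_zmultiples _

theorem PreconnectedSpace.eq_of_exp_eq_one {X : Type*} [TopologicalSpace X] [PreconnectedSpace X]
    {H : X → ℂ} (hH : Continuous H) (h1 : ∀ x, exp (H x) = 1) (x y : X) : H x = H y :=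
  isPreconnected_univ.constant_of_mapsTo isDiscrete_setOf_exp_eq_one hH.continuousOn
    (fun x _ ↦ h1 x) trivial trivial

theorem Complex.exp_mixedPart_eq_one_of_exp_eq_mul {α β : Type*} {q : α × β → ℂ} {f : α → ℂ}
    {g : β → ℂ} (h : ∀ x y, exp (q (x, y)) = f x * g y) (x x₀ : α) (y y₀ : β) :
    exp (q (x, y) + q (x₀, y₀) - q (x, y₀) - q (x₀, y)) = 1 := by
  have hne := mul_ne_zero (exp_ne_zero (q (x, y₀))) (exp_ne_zero (q (x₀, y)))
  rw [exp_sub, exp_sub, exp_add, div_div, div_eq_one_iff_eq hne, h, h, h, h]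
  ring

/-- If `exp (q (x, y))` factors as `f x · g y`, then the mixed (cross) part of the
continuous function `q` vanishes. -/
theorem mixed_part_vanishes_of_exp_factorizes (q : ℂ × ℂ → ℂ) (hq : Continuous q)
    (h : ∃ f g : ℂ → ℂ, ∀ x y : ℂ, Complex.exp (q (x, y)) = f x * g y) :
    ∀ x y : ℂ, q (x, y) + q (0, 0) - q (x, 0) - q (0, y) = 0 := by
  obtain ⟨f, g, hfg⟩ := h
  intro x y
  set H : ℂ × ℂ → ℂ := fun p ↦ q p + q (0, 0) - q (p.1, 0) - q (0, p.2)
  have hH : Continuous H := by fun_prop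
  calc q (x, y) + q (0, 0) - q (x, 0) - q (0, y) = H (x, y) := rfl
    _ = H (0, 0) := PreconnectedSpace.eq_of_exp_eq_one hH
        (fun p ↦ exp_mixedPart_eq_one_of_exp_eq_mul hfg p.1 0 p.2 0) _ _
    _ = 0 := by simp [H]
end

section
/- Let α, β be complex numbers with |α|² + |β|² = 1, and define p : ℂ × ℂ → ℂ by p (u, v) = ((conj α)·u + (conj β)·v)² · ((−β)·u + α·v)². Then there exist u, v ∈ ℂ such that p (u, v) − p (u, 0) − p (0, v) + p (0, 0) ≠ 0. -/
/-!
With `x = |α|²` and `y = |β|²`, the product of the two linear forms is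
`-ᾱβ u² + (x - y) u v + αβ̄ v²`, so the mixed part of `p` is `u v` times a binary quadratic form
with `u²` coefficient `-2ᾱβ (x - y)` and `u v` coefficient `(x - y)² - 2 x y = 1 - 6 x y`.
If the latter vanishes then `x y = 1/6`, so `ᾱβ ≠ 0` and `x ≠ y`, and the former does not.
-/

/-- The quartic form arising from a beam-splitter acting on a superposition of two-mode
squeezed vacuum states. -/
noncomputable def beamSplitterQuartic (α β : ℂ) : ℂ × ℂ → ℂ :=
  fun q => ((starRingEnd ℂ α) * q.1 + (starRingEnd ℂ β) * q.2) ^ 2 *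
    ((-β) * q.1 + α * q.2) ^ 2

open ComplexConjugate

theorem eq_zero_of_forall_mul_quadratic_eq_zero {K : Type*} [Field K] [CharZero K] {a b c : K}
    (h : ∀ v : K, v * (a + b * v + c * v ^ 2) = 0) : a = 0 ∧ b = 0 ∧ c = 0 := by
  have h₁ := h 1
  have h₂ := h (-1)
  have h₃ := h 2
  have hb : b = 0 := by linear_combination (h₁ + h₂) / 2
  have hc : c = 0 := by linear_combination (h₃ / 2 - h₁ - hb) / 3
  exact ⟨by linear_combination h₁ - hb - hc, hb, hc⟩

theorem mul_ne_zero_and_ne_of_add_eq_one_of_sub_sq_eq {K : Type*} [Field K] [CharZero K]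
    {x y : K} (hsum : x + y = 1) (h : (x - y) ^ 2 - 2 * x * y = 0) : x * y ≠ 0 ∧ x ≠ y := by
  have hxy : x * y = 1 / 6 := by linear_combination (hsum * (x + y + 1) - h) / 6
  refine ⟨by rw [hxy]; norm_num, fun hxy_eq => ?_⟩
  have hx : x = 1 / 2 := by linear_combination (hsum + hxy_eq) / 2
  have : (1 / 4 : K) = 1 / 6 := by rw [← hxy, ← hxy_eq, hx]; norm_num
  norm_num at this

theorem beamSplitterQuartic_mixed_part_eq (α β u v : ℂ) :
    beamSplitterQuartic α β (u, v) - beamSplitterQuartic α β (u, 0) -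
        beamSplitterQuartic α β (0, v) + beamSplitterQuartic α β (0, 0) =
      u * v * (-2 * (conj α * β) * (conj α * α - conj β * β) * u ^ 2 +
        ((conj α * α - conj β * β) ^ 2 - 2 * (conj α * α) * (conj β * β)) * u * v +
        2 * (α * conj β) * (conj α * α - conj β * β) * v ^ 2) := by
  simp only [beamSplitterQuartic]
  ring

/-- The mixed part of the quartic form `p` never vanishes identically, for any admissible
beam-splitter parameters `(α, β)`. -/
theorem beamSplitterQuartic_mixed_part_ne_zero (α β : ℂ)
    (h : ‖α‖ ^ 2 + ‖β‖ ^ 2 = 1) :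
    ∃ u v : ℂ,
      beamSplitterQuartic α β (u, v) - beamSplitterQuartic α β (u, 0) -
        beamSplitterQuartic α β (0, v) + beamSplitterQuartic α β (0, 0) ≠ 0 := by
  by_contra! hzero
  set x := conj α * α
  set y := conj β * β
  have hsum : x + y = 1 := by
    simp only [x, y, Complex.conj_mul']
    exact_mod_cast h
  obtain ⟨hA, hT, -⟩ := eq_zero_of_forall_mul_quadratic_eq_zero
      (a := -2 * (conj α * β) * (x - y)) (b := (x - y) ^ 2 - 2 * x * y)
      (c := 2 * (α * conj β) * (x - y)) fun v => by
    rw [← hzero 1 v, beamSplitterQuartic_mixed_part_eq]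
    ring
  obtain ⟨hxy, hne⟩ := mul_ne_zero_and_ne_of_add_eq_one_of_sub_sq_eq hsum hT
  have hαβ : conj α * β ≠ 0 :=
    left_ne_zero_of_mul (a := conj α * β) (b := α * conj β) (by convert hxy using 1; ring)
  exact mul_ne_zero (mul_ne_zero (by norm_num) hαβ) (sub_ne_zero.mpr hne) hA
end

section
/- Let r be a real number with r > 0, let θ be a real number, and let α, β be complex numbers with |α|² + |β|² = 1. Then there do not exist functions f, f' : ℂ → ℂ such that for all γ, γ' ∈ ℂ one has Complex.exp ( (Real.tanh r)² · ((conj α)·(conj γ) + (conj β)·(conj γ'))² · (exp(−i·θ))² · ((−β)·(conj γ) + α·(conj γ'))² ) = f γ · f' γ'. -/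
/-!
Writing `x = conj γ`, `y = conj γ'`, the exponent is `c · q(x, y)²` with `c = tanh² r · e^{-2iθ} ≠ 0`
and `q = (conj α x + conj β y)(-β x + α y) = A x² + B xy + C y²`. If `exp ∘ Φ` factorizes, the
cross term `Φ(x, y) + Φ(0, 0) - Φ(x, 0) - Φ(0, y)` has exponential `1`. As `Φ` is homogeneous of
degree 4 and `s ↦ s⁴` is onto `ℂ`, the same holds for every complex multiple of the cross term,
which forces it to vanish.
Comparing coefficients of `q²` then gives `B = 0` and `AC = 0`, i.e. `|α|² = |β|²` and
`|α|²|β|² = 0`, incompatible with `|α|² + |β|² = 1`.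
-/

open Complex ComplexConjugate

theorem exp_cross_eq_one_of_exp_eq_mul {X Y : Type*} {E : X → Y → ℂ} {f : X → ℂ} {g : Y → ℂ}
    (h : ∀ x y, exp (E x y) = f x * g y) (x x₀ : X) (y y₀ : Y) :
    exp (E x y + E x₀ y₀ - E x y₀ - E x₀ y) = 1 := by
  have hne : exp (E x y₀) * exp (E x₀ y) ≠ 0 := mul_ne_zero (exp_ne_zero _) (exp_ne_zero _)
  rw [exp_sub, exp_sub, exp_add, div_div, div_eq_one_iff_eq hne, h, h, h, h]
  ring

theorem eq_zero_of_forall_exp_pow_mul_eq_one {w : ℂ} {n : ℕ} (hn : n ≠ 0)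
    (h : ∀ z : ℂ, exp (z ^ n * w) = 1) : w = 0 := by
  by_contra hw
  have h1 := h (w⁻¹ ^ (n⁻¹ : ℂ))
  rw [cpow_nat_inv_pow _ hn, inv_mul_cancel₀ hw, ← ofReal_one, ← ofReal_exp] at h1
  exact one_ne_zero (Real.exp_eq_one_iff 1 |>.mp (mod_cast h1))

theorem add_eq_of_exp_homogeneous_eq_mul {Φ : ℂ → ℂ → ℂ} {n : ℕ} (hn : n ≠ 0)
    (hΦ : ∀ s x y, Φ (s * x) (s * y) = s ^ n * Φ x y) {f g : ℂ → ℂ}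
    (h : ∀ x y, exp (Φ x y) = f x * g y) (x y : ℂ) : Φ x y = Φ x 0 + Φ 0 y := by
  have hscale (s : ℂ) := exp_cross_eq_one_of_exp_eq_mul h (s * x) (s * 0) (s * y) (s * 0)
  simp only [hΦ, ← mul_add, ← mul_sub] at hscale
  have := eq_zero_of_forall_exp_pow_mul_eq_one hn hscale
  have h00 : Φ 0 0 = 0 := by simpa [hn] using hΦ 0 0 0
  linear_combination this - h00

theorem middle_eq_zero_of_sq_quadratic_eq {K : Type*} [Field K] [CharZero K] {A B C : K}
    (h : ∀ x y : K, (A * x ^ 2 + B * x * y + C * y ^ 2) ^ 2 = (A * x ^ 2) ^ 2 + (C * y ^ 2) ^ 2) :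
    B = 0 ∧ A * C = 0 := by
  -- The cross terms of the square are `2AB x³y + (B² + 2AC) x²y² + 2BC xy³`.
  have h1 := h 1 1
  have h2 := h 1 (-1)
  have h3 := h 2 1
  have hAB : A * B = 0 := by linear_combination (h3 - 3 * h1 - h2) / 12
  have hBC : B * C = 0 := by linear_combination (h1 - h2) / 4 - hAB
  have hmid : B ^ 2 + 2 * (A * C) = 0 := by linear_combination (h1 + h2) / 2
  have hB : B = 0 := pow_eq_zero_iff (n := 3) (by norm_num) |>.mp
    (by linear_combination B * hmid - 2 * C * hAB)
  exact ⟨hB, by linear_combination hmid / 2 - B * hB / 2⟩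

/-- The joint coherent-state amplitude of a beam-splitter-rotated superposition of two-mode
squeezed vacuum states does not factorize: there are no functions `f, f' : ℂ → ℂ` such that
`exp( tanh²r · (conj α · conj γ + conj β · conj γ')² · (e^{−iθ})² · (−β · conj γ + α · conj γ')² )
  = f γ · f' γ'` for all `γ, γ'`. -/
theorem sTMSV_amplitude_not_factorizable (r : ℝ) (hr : 0 < r) (θ : ℝ) (α β : ℂ)
    (h : ‖α‖ ^ 2 + ‖β‖ ^ 2 = 1) :
    ¬ ∃ f f' : ℂ → ℂ, ∀ γ γ' : ℂ,
      Complex.exp (((Real.tanh r : ℂ)) ^ 2 *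
          ((starRingEnd ℂ α) * (starRingEnd ℂ γ) + (starRingEnd ℂ β) * (starRingEnd ℂ γ')) ^ 2 *
          (Complex.exp (-(Complex.I * θ))) ^ 2 *
          ((-β) * (starRingEnd ℂ γ) + α * (starRingEnd ℂ γ')) ^ 2) = f γ * f' γ' := by
  rintro ⟨f, f', hf⟩
  set c : ℂ := (Real.tanh r : ℂ) ^ 2 * exp (-(I * θ)) ^ 2
  have hc : c ≠ 0 := by
    have : 0 < Real.tanh r := by
      rw [Real.tanh_eq_sinh_div_cosh]
      exact div_pos (Real.sinh_pos_iff.mpr hr) (Real.cosh_pos r)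
    exact mul_ne_zero (pow_ne_zero _ (mod_cast this.ne')) (pow_ne_zero _ (exp_ne_zero _))
  set A := -(conj α * β)
  set B := conj α * α - conj β * β
  set C := conj β * α
  have hamp : ∀ x y : ℂ, exp (c * (A * x ^ 2 + B * x * y + C * y ^ 2) ^ 2) =
      (f ∘ conj) x * (f' ∘ conj) y := fun x y => by
    rw [Function.comp_apply, Function.comp_apply, ← hf]
    congr 1
    simp only [c, A, B, C, conj_conj]
    ring
  have hsep := add_eq_of_exp_homogeneous_eq_mul (n := 4) (by norm_num) (fun s x y => by ring) hamp
  obtain ⟨hB, hAC⟩ := middle_eq_zero_of_sq_quadratic_eq fun x y =>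
    mul_left_cancel₀ hc (by simpa [mul_add] using hsep x y)
  have hdiff : ((‖α‖ ^ 2 - ‖β‖ ^ 2 : ℝ) : ℂ) = 0 := by
    push_cast
    rw [← conj_mul', ← conj_mul']
    exact hB
  have hprod : ((‖α‖ ^ 2 * ‖β‖ ^ 2 : ℝ) : ℂ) = 0 := by
    push_cast
    rw [← conj_mul', ← conj_mul']
    linear_combination -hAC
  nlinarith [ofReal_eq_zero.mp hdiff, ofReal_eq_zero.mp hprod]
end

section
/- Let m be a natural number and let ω : (Fin m → ℂ) → ℂ be a continuous function that is not identically zero and satisfies, for all z, w : Fin m → ℂ, ω (z + w) = ω z · ω w and ω (−z) = conj (ω z). Then there exists α : Fin m → ℂ such that for all z : Fin m → ℂ, ω z = Complex.exp ( Σ_{j} ( conj (z j) · α j − z j · conj (α j) ) ). -/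
/-!
Since `ℂ^m` is simply connected, the nowhere-vanishing `ω` has a continuous logarithm `L` with
`L 0 = 0`. Uniqueness of lifts through the covering `exp : ℂ → ℂ \ {0}` makes `L` additive, hence
`ℝ`-linear by continuity, and turns `ω (-z) = conj (ω z)` into `-L z = conj (L z)`, so `L` is purely
imaginary. Reading off the values of `L` on the real basis `eⱼ, i eⱼ` gives the amplitudes `α`.
-/

open Complex ComplexConjugate

theorem Complex.eq_of_exp_comp_eq {A : Type*} [TopologicalSpace A] [PreconnectedSpace A]
    {g₁ g₂ : A → ℂ} (h₁ : Continuous g₁) (h₂ : Continuous g₂)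
    (hexp : ∀ a, exp (g₁ a) = exp (g₂ a)) (a₀ : A) (ha₀ : g₁ a₀ = g₂ a₀) : g₁ = g₂ :=
  isCoveringMap_exp.eq_of_comp_eq h₁ h₂ (funext fun a => Subtype.ext (hexp a)) a₀ ha₀

theorem Complex.exists_continuous_log {A : Type*} [TopologicalSpace A] [SimplyConnectedSpace A]
    [LocallyPathConnectedSpace A] {f : A → ℂ} (hf : Continuous f) (hf0 : ∀ a, f a ≠ 0)
    {a₀ : A} {e₀ : ℂ} (he₀ : exp e₀ = f a₀) :
    ∃ g : A → ℂ, Continuous g ∧ g a₀ = e₀ ∧ ∀ a, exp (g a) = f a := by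
  obtain ⟨g, ⟨hg₀, hg⟩, -⟩ :=
    isCoveringMapOn_exp.existsUnique_continuousMap_lifts ⟨f, hf⟩ he₀ hf0
  exact ⟨g, g.continuous, hg₀, congrFun hg⟩

section RealVectorSpace

variable {E : Type*} [AddCommGroup E] [Module ℝ E] [TopologicalSpace E] [ContinuousAdd E]
  [ContinuousSMul ℝ E]

theorem exists_continuousLinearMap_exp_eq_of_map_add_eq_mul [LocallyPathConnectedSpace E]
    {ω : E → ℂ} (hcont : Continuous ω) (h0 : ω 0 = 1) (hmul : ∀ z w, ω (z + w) = ω z * ω w) :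
    ∃ L : E →L[ℝ] ℂ, ∀ z, ω z = exp (L z) := by
  have hne : ∀ z, ω z ≠ 0 := fun z h => by
    simpa [← hmul, h, h0] using hmul z (-z)
  obtain ⟨g, hg, hg0, hexp⟩ := exists_continuous_log hcont hne (a₀ := 0) (e₀ := 0) (by simp [h0])
  have hadd : (fun p : E × E => g (p.1 + p.2)) = fun p => g p.1 + g p.2 :=
    eq_of_exp_comp_eq (by fun_prop) (by fun_prop) (fun p => by simp [exp_add, hexp, hmul])
      (0, 0) (by simp [hg0])
  let G : E →+ ℂ := { toFun := g, map_zero' := hg0, map_add' := fun z w => congrFun hadd (z, w) }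
  exact ⟨G.toRealLinearMap hg, fun z => (hexp z).symm⟩

theorem ContinuousLinearMap.re_eq_zero_of_exp_neg_eq_conj (L : E →L[ℝ] ℂ)
    (hconj : ∀ z, exp (L (-z)) = conj (exp (L z))) (z : E) : (L z).re = 0 := by
  have hneg : (fun z => -L z) = fun z => conj (L z) :=
    eq_of_exp_comp_eq (by fun_prop) (by fun_prop)
      (fun z => by simpa [← exp_conj] using hconj z) 0 (by simp)
  have := congrArg re (congrFun hneg z)
  rw [neg_re, conj_re] at this
  linarith

end RealVectorSpace

section Coordinates

variable {ι : Type*} [Fintype ι] [DecidableEq ι]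

theorem LinearMap.apply_eq_sum_re_smul_add_im_smul {M : Type*} [AddCommGroup M] [Module ℝ M]
    (ℓ : (ι → ℂ) →ₗ[ℝ] M) (z : ι → ℂ) :
    ℓ z = ∑ j, ((z j).re • ℓ (Pi.single j 1) + (z j).im • ℓ (Pi.single j I)) := by
  conv_lhs => rw [← Finset.univ_sum_single z]
  rw [map_sum]
  refine Finset.sum_congr rfl fun j _ => ?_
  have hsingle : Pi.single j (z j) = (z j).re • Pi.single (M := fun _ => ℂ) j 1
      + (z j).im • Pi.single (M := fun _ => ℂ) j I := by
    rw [← Pi.single_smul, ← Pi.single_smul, ← Pi.single_add]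
    simp [re_add_im]
  rw [hsingle, map_add, map_smul, map_smul]

theorem LinearMap.exists_eq_sum_conj_mul_sub_mul_conj (ℓ : (ι → ℂ) →ₗ[ℝ] ℂ)
    (hre : ∀ z, (ℓ z).re = 0) :
    ∃ α : ι → ℂ, ∀ z, ℓ z = ∑ j, (conj (z j) * α j - z j * conj (α j)) := by
  refine ⟨fun j => ⟨-(ℓ (Pi.single j I)).im / 2, (ℓ (Pi.single j 1)).im / 2⟩, fun z => ?_⟩
  rw [ℓ.apply_eq_sum_re_smul_add_im_smul]
  refine Finset.sum_congr rfl fun j _ => Complex.ext ?_ ?_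
  · simp [hre]
  · simp only [real_smul, add_im, mul_im, ofReal_re, ofReal_im, zero_mul, add_zero, sub_im,
      conj_re, conj_im, neg_mul, mul_neg]
    ring

end Coordinates

/-- A continuous, not identically zero, multiplicative solution of the Cauchy functional
equation on `ℂ^m` satisfying `ω (−z) = conj (ω z)` is the characteristic-function factor of
a multi-mode coherent state: `ω z = exp (Σ_j (conj (z j) · α j − z j · conj (α j)))`. -/
theorem cauchy_multiplicative_coherent_state (m : ℕ) (ω : (Fin m → ℂ) → ℂ)
    (hcont : Continuous ω) (hne : ∃ z : Fin m → ℂ, ω z ≠ 0)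
    (hmul : ∀ z w : Fin m → ℂ, ω (z + w) = ω z * ω w)
    (hconj : ∀ z : Fin m → ℂ, ω (-z) = starRingEnd ℂ (ω z)) :
    ∃ α : Fin m → ℂ, ∀ z : Fin m → ℂ,
      ω z = Complex.exp (∑ j, (starRingEnd ℂ (z j) * α j - z j * starRingEnd ℂ (α j))) := by
  obtain ⟨z₀, hz₀⟩ := hne
  have h0 : ω 0 = 1 := mul_left_cancel₀ hz₀ (by rw [← hmul, add_zero, mul_one])
  obtain ⟨L, hL⟩ := exists_continuousLinearMap_exp_eq_of_map_add_eq_mul hcont h0 hmul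
  have hre := L.re_eq_zero_of_exp_neg_eq_conj fun z => by rw [← hL, ← hL, hconj]
  obtain ⟨α, hα⟩ := (L : (Fin m → ℂ) →ₗ[ℝ] ℂ).exists_eq_sum_conj_mul_sub_mul_conj hre
  exact ⟨α, fun z => by rw [hL, ← hα]; rfl⟩
end

section
/- Let m be a natural number and let d : Fin m → ℝ be positive and pairwise distinct (d i > 0 for all i, and d i ≠ d j whenever i ≠ j). Let Λ be the 2m × 2m real matrix given in block form as Λ = fromBlocks (diagonal d) 0 0 (diagonal d). Let U be a 2m × 2m real matrix that is orthogonal (U · Uᵀ = 1), symplectic (U ∈ Matrix.symplecticGroup with respect to the standard symplectic form J = fromBlocks 0 (−1) 1 0), and satisfies U · Λ · Uᵀ = Λ. Then, writing U = fromBlocks A B C D with m × m blocks, each of the four blocks A, B, C, D is a diagonal matrix; that is, U acts as an independent single-mode rotation on each mode. -/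
open Matrix in
/-- A matrix commuting with a diagonal matrix with pairwise distinct entries is diagonal. -/
theorem comm_diagonal_isDiag {m : ℕ} {d : Fin m → ℝ}
    (hdist : ∀ i j, i ≠ j → d i ≠ d j) {M : Matrix (Fin m) (Fin m) ℝ}
    (h : M * Matrix.diagonal d = Matrix.diagonal d * M) : M.IsDiag := by
  intro i j hij
  have := congrFun (congrFun h i) j
  rw [Matrix.mul_diagonal, Matrix.diagonal_mul] at this
  have hd : d j ≠ d i := hdist j i (fun e => hij e.symm)
  have : M i j * (d j - d i) = 0 := by ring_nf; linarith [this]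
  rcases mul_eq_zero.mp this with h' | h'
  · exact h'
  · exact absurd (by linarith : d j = d i) hd

open Matrix in
/-- Uniqueness of the Williamson decomposition, non-degenerate case: any orthogonal
symplectic matrix preserving a Williamson form with pairwise distinct positive symplectic
eigenvalues has all four of its blocks diagonal, i.e. it acts as an independent single-mode
rotation on each mode. -/
theorem williamson_uniqueness_nondegenerate (m : ℕ) (d : Fin m → ℝ)
    (hd : ∀ i, 0 < d i) (hdist : ∀ i j, i ≠ j → d i ≠ d j)
    (A B C D : Matrix (Fin m) (Fin m) ℝ)
    (horth : Matrix.fromBlocks A B C D * (Matrix.fromBlocks A B C D)ᵀ = 1)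
    (hsymp : Matrix.fromBlocks A B C D ∈ Matrix.symplecticGroup (Fin m) ℝ)
    (hpres : Matrix.fromBlocks A B C D *
        Matrix.fromBlocks (Matrix.diagonal d) 0 0 (Matrix.diagonal d) *
        (Matrix.fromBlocks A B C D)ᵀ =
      Matrix.fromBlocks (Matrix.diagonal d) 0 0 (Matrix.diagonal d)) :
    A.IsDiag ∧ B.IsDiag ∧ C.IsDiag ∧ D.IsDiag := by
  set U := Matrix.fromBlocks A B C D with hU
  have horth' : Uᵀ * U = 1 := mul_eq_one_comm.mp horth
  have hcomm : U * Matrix.fromBlocks (Matrix.diagonal d) 0 0 (Matrix.diagonal d) =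
      Matrix.fromBlocks (Matrix.diagonal d) 0 0 (Matrix.diagonal d) * U := by
    have := congrArg (· * U) hpres
    simpa [Matrix.mul_assoc, horth'] using this
  rw [hU, Matrix.fromBlocks_multiply, Matrix.fromBlocks_multiply] at hcomm
  simp only [Matrix.mul_zero, Matrix.zero_mul, add_zero, zero_add] at hcomm
  have h11 := congrArg Matrix.toBlocks₁₁ hcomm
  have h12 := congrArg Matrix.toBlocks₁₂ hcomm
  have h21 := congrArg Matrix.toBlocks₂₁ hcomm
  have h22 := congrArg Matrix.toBlocks₂₂ hcomm
  simp only [Matrix.toBlocks_fromBlocks₁₁, Matrix.toBlocks_fromBlocks₁₂,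
    Matrix.toBlocks_fromBlocks₂₁, Matrix.toBlocks_fromBlocks₂₂] at h11 h12 h21 h22
  exact ⟨comm_diagonal_isDiag hdist h11, comm_diagonal_isDiag hdist h12,
    comm_diagonal_isDiag hdist h21, comm_diagonal_isDiag hdist h22⟩
end

section
/- Let m be a natural number and let d : Fin m → ℝ be positive (d i > 0 for all i). Let Λ be the 2m × 2m real matrix given in block form as Λ = fromBlocks (diagonal d) 0 0 (diagonal d). Let U be a 2m × 2m real matrix that is orthogonal (U · Uᵀ = 1), symplectic (U ∈ Matrix.symplecticGroup with respect to the standard symplectic form J = fromBlocks 0 (−1) 1 0), and satisfies U · Λ · Uᵀ = Λ. Then, writing U = fromBlocks A B C D with m × m blocks, for all indices i, j with d i ≠ d j one has A i j = 0, B i j = 0, C i j = 0, and D i j = 0; that is, U is block diagonal with respect to the eigenspaces of equal symplectic eigenvalues, acting as an independent beam-splitter network within each degenerate block. -/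
open Matrix in
/-- Uniqueness of the Williamson decomposition, degenerate case: any orthogonal symplectic
matrix preserving a Williamson form with positive (possibly degenerate) symplectic
eigenvalues is block diagonal with respect to the eigenspaces of equal symplectic
eigenvalues. -/
theorem williamson_uniqueness_degenerate (m : ℕ) (d : Fin m → ℝ)
    (hd : ∀ i, 0 < d i)
    (A B C D : Matrix (Fin m) (Fin m) ℝ)
    (horth : Matrix.fromBlocks A B C D * (Matrix.fromBlocks A B C D)ᵀ = 1)
    (hsymp : Matrix.fromBlocks A B C D ∈ Matrix.symplecticGroup (Fin m) ℝ)
    (hpres : Matrix.fromBlocks A B C D *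
        Matrix.fromBlocks (Matrix.diagonal d) 0 0 (Matrix.diagonal d) *
        (Matrix.fromBlocks A B C D)ᵀ =
      Matrix.fromBlocks (Matrix.diagonal d) 0 0 (Matrix.diagonal d)) :
    ∀ i j : Fin m, d i ≠ d j → A i j = 0 ∧ B i j = 0 ∧ C i j = 0 ∧ D i j = 0 := by
  intro i j hij
  set U := Matrix.fromBlocks A B C D with hU
  set Λ := Matrix.fromBlocks (Matrix.diagonal d) 0 0 (Matrix.diagonal d) with hΛ
  have h2 : Uᵀ * U = 1 := mul_eq_one_comm.mp horth
  have hcomm : U * Λ = Λ * U := by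
    have := congrArg (· * U) hpres
    simpa [mul_assoc, h2] using this
  have key : ∀ (X : Matrix (Fin m) (Fin m) ℝ),
      X * Matrix.diagonal d = Matrix.diagonal d * X → X i j = 0 := by
    intro X hX
    have h := congrFun (congrFun hX i) j
    rw [Matrix.mul_diagonal, Matrix.diagonal_mul] at h
    by_contra hz
    exact hij (mul_right_cancel₀ hz (by linarith [h])).symm
  have hAeq := congrFun (congrFun hcomm (Sum.inl i)) (Sum.inl j)
  have hBeq := congrFun (congrFun hcomm (Sum.inl i)) (Sum.inr j)
  have hCeq := congrFun (congrFun hcomm (Sum.inr i)) (Sum.inl j)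
  have hDeq := congrFun (congrFun hcomm (Sum.inr i)) (Sum.inr j)
  simp only [hU, hΛ, Matrix.fromBlocks_multiply, Matrix.fromBlocks_apply₁₁,
    Matrix.fromBlocks_apply₁₂, Matrix.fromBlocks_apply₂₁, Matrix.fromBlocks_apply₂₂,
    Matrix.mul_zero, Matrix.zero_mul, add_zero, zero_add,
    Matrix.mul_diagonal, Matrix.diagonal_mul, Matrix.add_apply] at hAeq hBeq hCeq hDeq
  refine ⟨?_, ?_, ?_, ?_⟩ <;>
    [skip; skip; skip; skip] <;>
    first
    | (by_contra hz; exact hij (mul_right_cancel₀ hz (by linarith)).symm)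
end

section
/- Let m be a natural number, let S be a 2m × 2m real symplectic matrix (S ∈ Matrix.symplecticGroup with respect to the standard symplectic form J = fromBlocks 0 (−1) 1 0), and let d : Fin m → ℝ satisfy d j ≥ 1 for all j. Let Λ = fromBlocks (diagonal d) 0 0 (diagonal d). Then: (a) trace (S · Λ · Sᵀ) ≥ Σ_{k,ℓ} (S k ℓ)², and hence trace (S · Λ · Sᵀ) is at least the square of the ℓ²-operator norm of S; and (b) trace (S · Λ · Sᵀ) ≥ trace Λ. -/
open Matrix in
set_option maxHeartbeats 1000000 in
/-- Energy of a Gaussian-unitarily rotated pure state: for a symplectic `S` and a Williamson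
form `Λ = fromBlocks (diagonal d) 0 0 (diagonal d)` with all `d j ≥ 1`, one has
(a) `trace (S·Λ·Sᵀ) ≥ Σ_{k,ℓ} (S k ℓ)²`, hence `trace (S·Λ·Sᵀ)` dominates the square of the
ℓ²-operator norm of `S`, and (b) `trace (S·Λ·Sᵀ) ≥ trace Λ`. -/
theorem trace_symplectic_rotated_williamson (m : ℕ)
    (S : Matrix (Fin m ⊕ Fin m) (Fin m ⊕ Fin m) ℝ)
    (hS : S ∈ Matrix.symplecticGroup (Fin m) ℝ)
    (d : Fin m → ℝ) (hd : ∀ j, 1 ≤ d j) :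
    (∑ k, ∑ l, S k l ^ 2 ≤
      (S * Matrix.fromBlocks (Matrix.diagonal d) 0 0 (Matrix.diagonal d) * Sᵀ).trace) ∧
    (‖LinearMap.toContinuousLinearMap (Matrix.toEuclideanLin S)‖ ^ 2 ≤
      (S * Matrix.fromBlocks (Matrix.diagonal d) 0 0 (Matrix.diagonal d) * Sᵀ).trace) ∧
    ((Matrix.fromBlocks (Matrix.diagonal d) 0 0 (Matrix.diagonal d)).trace ≤
      (S * Matrix.fromBlocks (Matrix.diagonal d) 0 0 (Matrix.diagonal d) * Sᵀ).trace) := by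
  set e : Fin m ⊕ Fin m → ℝ := Sum.elim d d with he
  have he1 : ∀ l, 1 ≤ e l := by rintro (j | j) <;> exact hd j
  have hΛ : Matrix.fromBlocks (Matrix.diagonal d) 0 0 (Matrix.diagonal d)
      = Matrix.diagonal e := Matrix.fromBlocks_diagonal d d
  -- trace formula
  have htr : (S * Matrix.fromBlocks (Matrix.diagonal d) 0 0 (Matrix.diagonal d) * Sᵀ).trace
      = ∑ k, ∑ l, e l * S k l ^ 2 := by
    rw [hΛ]
    simp only [Matrix.trace, Matrix.diag, Matrix.mul_apply, Matrix.diagonal_apply,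
      Matrix.transpose_apply, mul_ite, mul_zero, ite_mul, zero_mul, Finset.sum_ite_eq,
      Finset.sum_ite_eq', Finset.mem_univ, if_true]
    congr 1; ext k; congr 1; ext l; ring
  -- part (a)
  have ha : ∑ k, ∑ l, S k l ^ 2 ≤
      (S * Matrix.fromBlocks (Matrix.diagonal d) 0 0 (Matrix.diagonal d) * Sᵀ).trace := by
    rw [htr]
    refine Finset.sum_le_sum fun k _ => Finset.sum_le_sum fun l _ => ?_
    exact le_mul_of_one_le_left (sq_nonneg _) (he1 l)
  refine ⟨ha, ?_, ?_⟩
  · -- operator norm part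
    set T := LinearMap.toContinuousLinearMap (Matrix.toEuclideanLin S) with hT
    have hF : ‖T‖ ≤ Real.sqrt (∑ k, ∑ l, S k l ^ 2) := by
      refine ContinuousLinearMap.opNorm_le_bound _ (Real.sqrt_nonneg _) fun x => ?_
      have hco : ∀ k, T x k = ∑ l, S k l * x l := by
        intro k
        rw [hT, LinearMap.coe_toContinuousLinearMap', Matrix.toEuclideanLin_apply]
        rfl
      have hx2 : ‖T x‖ ^ 2 ≤ (∑ k, ∑ l, S k l ^ 2) * ‖x‖ ^ 2 := by
        rw [EuclideanSpace.norm_eq, EuclideanSpace.norm_eq,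
          Real.sq_sqrt (by positivity), Real.sq_sqrt (by positivity)]
        simp only [Real.norm_eq_abs, sq_abs, hco]
        rw [Finset.sum_mul]
        refine Finset.sum_le_sum fun k _ => ?_
        exact Finset.sum_mul_sq_le_sq_mul_sq Finset.univ (fun l => S k l) (fun l => x l)
      calc ‖T x‖ = Real.sqrt (‖T x‖ ^ 2) := (Real.sqrt_sq (norm_nonneg _)).symm
        _ ≤ Real.sqrt ((∑ k, ∑ l, S k l ^ 2) * ‖x‖ ^ 2) := Real.sqrt_le_sqrt hx2
        _ = Real.sqrt (∑ k, ∑ l, S k l ^ 2) * ‖x‖ := by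
            rw [Real.sqrt_mul (by positivity), Real.sqrt_sq (norm_nonneg _)]
    have h2 : ‖T‖ ^ 2 ≤ ∑ k, ∑ l, S k l ^ 2 := by
      have := pow_le_pow_left₀ (norm_nonneg _) hF 2
      rwa [Real.sq_sqrt (by positivity)] at this
    exact h2.trans ha
  · -- part (c)
    have hcol : ∀ j : Fin m,
        2 ≤ (∑ k, S k (Sum.inl j) ^ 2) + ∑ k, S k (Sum.inr j) ^ 2 := by
      intro j
      have hJ : Sᵀ * Matrix.J (Fin m) ℝ * S = Matrix.J (Fin m) ℝ :=
        SymplecticGroup.mem_iff'.mp hS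
      have hent := congrFun (congrFun hJ (Sum.inl j)) (Sum.inr j)
      simp only [Matrix.mul_apply, Matrix.transpose_apply, Matrix.J, Fintype.sum_sum_type,
        Matrix.fromBlocks_apply₁₂, Matrix.fromBlocks_apply₁₁, Matrix.fromBlocks_apply₂₁,
        Matrix.fromBlocks_apply₂₂, Matrix.zero_apply, Matrix.neg_apply, Matrix.one_apply,
        mul_zero, zero_mul, mul_ite, mul_neg, mul_one, ite_mul, neg_mul, zero_add, add_zero,
        Finset.sum_ite_eq, Finset.sum_ite_eq', Finset.mem_univ, if_true,
        Finset.sum_const_zero, Finset.sum_neg_distrib] at hent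
      set u : Fin m ⊕ Fin m → ℝ := fun k => S k (Sum.inl j) with hu
      set v : Fin m ⊕ Fin m → ℝ := fun k => S k (Sum.inr j) with hv
      set g : Fin m ⊕ Fin m → ℝ :=
        Sum.elim (fun p => v (Sum.inr p)) (fun p => -v (Sum.inl p)) with hg
      have key : ∑ k, u k * g k = 1 := by
        rw [Fintype.sum_sum_type]
        simp only [hg, Sum.elim_inl, Sum.elim_inr, hu, hv, mul_neg, Finset.sum_neg_distrib]
        linarith [hent]
      have hg2 : ∑ k, g k ^ 2 = ∑ k, v k ^ 2 := by
        rw [Fintype.sum_sum_type, Fintype.sum_sum_type]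
        simp only [hg, Sum.elim_inl, Sum.elim_inr, neg_sq]
        ring
      have cs := Finset.sum_mul_sq_le_sq_mul_sq Finset.univ u g
      rw [key, hg2] at cs
      have hu0 : 0 ≤ ∑ k, u k ^ 2 := by positivity
      have hv0 : 0 ≤ ∑ k, v k ^ 2 := by positivity
      have h2le : 2 ≤ (∑ k, u k ^ 2) + ∑ k, v k ^ 2 := by
        nlinarith [sq_nonneg ((∑ k, u k ^ 2) - ∑ k, v k ^ 2),
          sq_nonneg ((∑ k, u k ^ 2) + (∑ k, v k ^ 2) - 2)]
      simpa [hu, hv] using h2le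
    rw [htr, hΛ, Matrix.trace_diagonal, Finset.sum_comm]
    calc ∑ l, e l = ∑ j : Fin m, (d j + d j) := by
          rw [he, Fintype.sum_sum_type]
          simp [Finset.sum_add_distrib]
      _ ≤ ∑ j : Fin m, (d j * ∑ k, S k (Sum.inl j) ^ 2 + d j * ∑ k, S k (Sum.inr j) ^ 2) := by
          refine Finset.sum_le_sum fun j _ => ?_
          have h2 := hcol j
          have hdj : 0 ≤ d j := le_trans zero_le_one (hd j)
          have hdj1 : 1 ≤ d j := hd j
          nlinarith [h2, hdj, hdj1]
      _ = ∑ l, ∑ k, e l * S k l ^ 2 := by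
          rw [Fintype.sum_sum_type]
          simp only [he, Sum.elim_inl, Sum.elim_inr, Finset.mul_sum]
          rw [Finset.sum_add_distrib]
end

section
/- For natural numbers n and d : Fin n → ℕ, let ρ, σ : ∀ j, Matrix (Fin (d j)) (Fin (d j)) ℂ be families of density matrices (each ρ j and σ j positive semidefinite with trace 1). Then the trace norm of the difference of the iterated Kronecker products satisfies ‖ ⊗_{j=0}^{n−1} ρ j − ⊗_{j=0}^{n−1} σ j ‖₁ ≤ Σ_{j=0}^{n−1} ‖ ρ j − σ j ‖₁. -/
/-!
Since `ρ₀ ⊗ P - σ₀ ⊗ Q = (ρ₀ - σ₀) ⊗ P + σ₀ ⊗ (P - Q)`, the triangle inequality and the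
multiplicativity `‖A ⊗ B‖₁ = ‖A‖₁ ‖B‖₁`, together with `‖P‖₁ = ‖σ₀‖₁ = 1` for density matrices,
bound the two-factor difference by `‖ρ₀ - σ₀‖₁ + ‖P - Q‖₁`; induction on the number of factors
telescopes this. The triangle inequality for Hermitian matrices comes from
`‖C‖₁ = re tr (S C)` with `S = sign C`, a matrix with `-1 ≤ S ≤ 1`.
-/

open scoped ComplexOrder

/-- The trace norm of a square complex matrix: the trace of the positive semidefinite
square root of `Aᴴ·A` (i.e. the sum of the singular values of `A`). -/
noncomputable def traceNorm {n : Type*} [Fintype n] [DecidableEq n]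
    (A : Matrix n n ℂ) : ℝ :=
  (((Matrix.posSemidef_conjTranspose_mul_self A).1.eigenvectorUnitary : Matrix n n ℂ) *
      Matrix.diagonal (((↑) : ℝ → ℂ) ∘ (√·) ∘ (Matrix.posSemidef_conjTranspose_mul_self A).1.eigenvalues) *
      (star (Matrix.posSemidef_conjTranspose_mul_self A).1.eigenvectorUnitary : Matrix n n ℂ)).trace.re

/-- The tensor product of a family of matrices, as a matrix indexed by the product of the
local index sets: its `(a, b)` entry is `∏ j, ρ j (a j) (b j)`. -/
def tensorProdMatrix {n : ℕ} {d : Fin n → ℕ}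
    (ρ : ∀ j, Matrix (Fin (d j)) (Fin (d j)) ℂ) :
    Matrix (∀ j, Fin (d j)) (∀ j, Fin (d j)) ℂ :=
  Matrix.of fun a b => ∏ j, ρ j (a j) (b j)

open scoped MatrixOrder Kronecker
open Matrix

namespace Matrix

theorem trace_submatrix_equiv {α n m : Type*} [AddCommMonoid α] [Fintype n] [Fintype m]
    (A : Matrix n n α) (e : m ≃ n) : (A.submatrix e e).trace = A.trace :=
  e.sum_comp fun i => A i i

theorem IsHermitian.kronecker {α n m : Type*} [CommSemiring α] [StarRing α]
    {A : Matrix n n α} {B : Matrix m m α} (hA : A.IsHermitian) (hB : B.IsHermitian) :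
    (A ⊗ₖ B).IsHermitian := by
  rw [IsHermitian, conjTranspose_kronecker, hA.eq, hB.eq]

variable {𝕜 n m : Type*} [RCLike 𝕜] [Fintype n] [DecidableEq n] [Fintype m] [DecidableEq m]

theorem cfcAbs_kronecker (A : Matrix n n 𝕜) (B : Matrix m m 𝕜) :
    CFC.abs (A ⊗ₖ B) = CFC.abs A ⊗ₖ CFC.abs B := by
  refine CFC.sqrt_unique ?_ ((CFC.abs_nonneg A).posSemidef.kronecker
    (CFC.abs_nonneg B).posSemidef).nonneg
  rw [← mul_kronecker_mul, CFC.abs_mul_abs, CFC.abs_mul_abs, star_eq_conjTranspose,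
    star_eq_conjTranspose, star_eq_conjTranspose, conjTranspose_kronecker, mul_kronecker_mul]

theorem cfcAbs_submatrix (A : Matrix n n 𝕜) (e : m ≃ n) :
    CFC.abs (A.submatrix e e) = (CFC.abs A).submatrix e e := by
  refine CFC.sqrt_unique ?_ ((CFC.abs_nonneg A).posSemidef.submatrix e).nonneg
  rw [submatrix_mul_equiv, CFC.abs_mul_abs, star_eq_conjTranspose, star_eq_conjTranspose,
    conjTranspose_submatrix, submatrix_mul_equiv]

theorem PosSemidef.trace_mul_nonneg {A B : Matrix n n 𝕜} (hA : A.PosSemidef)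
    (hB : B.PosSemidef) : 0 ≤ (A * B).trace := by
  obtain ⟨C, rfl⟩ := CStarAlgebra.nonneg_iff_eq_star_mul_self.mp hA.nonneg
  rw [star_eq_conjTranspose, Matrix.mul_assoc, trace_mul_comm, Matrix.mul_assoc,
    ← Matrix.mul_assoc]
  exact (hB.mul_mul_conjTranspose_same C).trace_nonneg

theorem trace_mul_le_trace_mul {S T P : Matrix n n 𝕜} (hST : S ≤ T) (hP : P.PosSemidef) :
    (S * P).trace ≤ (T * P).trace := by
  have := (le_iff.mp hST).trace_mul_nonneg hP
  rwa [sub_mul, trace_sub, sub_nonneg] at this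

theorem IsHermitian.exists_mul_eq_cfcAbs {C : Matrix n n 𝕜} (hC : C.IsHermitian) :
    ∃ S : Matrix n n 𝕜, -1 ≤ S ∧ S ≤ 1 ∧ S * C = CFC.abs C := by
  have hsign : ContinuousOn (fun x : ℝ => (SignType.sign x : ℝ)) (spectrum ℝ C) :=
    (hC.spectrum_real_eq_range_eigenvalues ▸ Set.finite_range _ :
      (spectrum ℝ C).Finite).continuousOn _
  refine ⟨cfc (fun x : ℝ => (SignType.sign x : ℝ)) C, ?_, cfc_le_one _ _ fun x _ => ?_, ?_⟩
  · simpa using algebraMap_le_cfc _ (-1 : ℝ) C fun x _ => by cases SignType.sign x <;> simp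
  · cases SignType.sign x <;> simp
  · nth_rw 2 [← cfc_id' ℝ C]
    rw [← cfc_mul .., CFC.abs_eq_cfc_norm C]
    simp only [sign_mul_self, Real.norm_eq_abs]

end Matrix

section traceNorm

variable {n m : Type*} [Fintype n] [DecidableEq n] [Fintype m] [DecidableEq m]

theorem traceNorm_eq_re_trace_cfcAbs (A : Matrix n n ℂ) :
    traceNorm A = (CFC.abs A).trace.re := by
  have hA := posSemidef_conjTranspose_mul_self A
  rw [CFC.abs, star_eq_conjTranspose, CFC.sqrt_eq_real_sqrt _ hA.nonneg, cfcₙ_eq_cfc,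
    hA.1.cfc_eq]
  rfl

theorem traceNorm_zero : traceNorm (0 : Matrix n n ℂ) = 0 := by
  simp [traceNorm_eq_re_trace_cfcAbs]

theorem traceNorm_of_posSemidef {A : Matrix n n ℂ} (hA : A.PosSemidef) :
    traceNorm A = A.trace.re := by
  rw [traceNorm_eq_re_trace_cfcAbs, CFC.abs_of_nonneg A hA.nonneg]

theorem traceNorm_kronecker (A : Matrix n n ℂ) (B : Matrix m m ℂ) :
    traceNorm (A ⊗ₖ B) = traceNorm A * traceNorm B := by
  have hA := Complex.nonneg_iff.mp (CFC.abs_nonneg A).posSemidef.trace_nonneg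
  have hB := Complex.nonneg_iff.mp (CFC.abs_nonneg B).posSemidef.trace_nonneg
  rw [traceNorm_eq_re_trace_cfcAbs, traceNorm_eq_re_trace_cfcAbs, traceNorm_eq_re_trace_cfcAbs,
    cfcAbs_kronecker, trace_kronecker, Complex.mul_re, ← hA.2, ← hB.2, mul_zero, sub_zero]

theorem traceNorm_submatrix (A : Matrix n n ℂ) (e : m ≃ n) :
    traceNorm (A.submatrix e e) = traceNorm A := by
  rw [traceNorm_eq_re_trace_cfcAbs, traceNorm_eq_re_trace_cfcAbs, cfcAbs_submatrix,
    trace_submatrix_equiv]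

/-- Split `A = A⁺ - A⁻`; since `-1 ≤ S ≤ 1`, multiplying by `S` can only shrink the traces of
both parts. -/
theorem re_trace_mul_le_traceNorm {S A : Matrix n n ℂ} (hS₁ : -1 ≤ S) (hS₂ : S ≤ 1)
    (hA : A.IsHermitian) : (S * A).trace.re ≤ traceNorm A := by
  have hpos := Complex.le_def.mp (trace_mul_le_trace_mul hS₂ (CFC.posPart_nonneg A).posSemidef)
  have hneg := Complex.le_def.mp (trace_mul_le_trace_mul hS₁ (CFC.negPart_nonneg A).posSemidef)
  rw [traceNorm_eq_re_trace_cfcAbs, ← CFC.posPart_add_negPart A hA.isSelfAdjoint]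
  conv_lhs => rw [← CFC.posPart_sub_negPart A hA.isSelfAdjoint]
  simp only [mul_sub, trace_sub, trace_add, Complex.sub_re, Complex.add_re, one_mul, neg_mul,
    trace_neg, Complex.neg_re] at hpos hneg ⊢
  linarith [hpos.1, hneg.1]

theorem traceNorm_add_le {A B : Matrix n n ℂ} (hA : A.IsHermitian) (hB : B.IsHermitian) :
    traceNorm (A + B) ≤ traceNorm A + traceNorm B := by
  obtain ⟨S, hS₁, hS₂, hS⟩ := (hA.add hB).exists_mul_eq_cfcAbs
  calc traceNorm (A + B) = (S * A).trace.re + (S * B).trace.re := by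
        rw [traceNorm_eq_re_trace_cfcAbs, ← hS, mul_add, trace_add, Complex.add_re]
    _ ≤ traceNorm A + traceNorm B :=
        add_le_add (re_trace_mul_le_traceNorm hS₁ hS₂ hA) (re_trace_mul_le_traceNorm hS₁ hS₂ hB)

theorem traceNorm_kronecker_sub_kronecker_le {ρ σ : Matrix n n ℂ} {P Q : Matrix m m ℂ}
    (hρ : ρ.IsHermitian) (hσ : σ.PosSemidef) (hσtr : σ.trace = 1)
    (hP : P.PosSemidef) (hPtr : P.trace = 1) (hQ : Q.IsHermitian) :
    traceNorm (ρ ⊗ₖ P - σ ⊗ₖ Q) ≤ traceNorm (ρ - σ) + traceNorm (P - Q) := by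
  have hsplit : ρ ⊗ₖ P - σ ⊗ₖ Q = (ρ - σ) ⊗ₖ P + σ ⊗ₖ (P - Q) := by
    ext ⟨i, j⟩ ⟨k, l⟩
    simp only [Matrix.sub_apply, Matrix.add_apply, kroneckerMap_apply]
    ring
  have hherm₁ : ((ρ - σ) ⊗ₖ P).IsHermitian := (hρ.sub hσ.1).kronecker hP.1
  have hherm₂ : (σ ⊗ₖ (P - Q)).IsHermitian := hσ.1.kronecker (hP.1.sub hQ)
  calc traceNorm (ρ ⊗ₖ P - σ ⊗ₖ Q)
      ≤ traceNorm ((ρ - σ) ⊗ₖ P) + traceNorm (σ ⊗ₖ (P - Q)) :=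
        hsplit ▸ traceNorm_add_le hherm₁ hherm₂
    _ = traceNorm (ρ - σ) + traceNorm (P - Q) := by
        rw [traceNorm_kronecker, traceNorm_kronecker, traceNorm_of_posSemidef hP, hPtr,
          traceNorm_of_posSemidef hσ, hσtr, Complex.one_re, mul_one, one_mul]

end traceNorm

theorem tensorProdMatrix_zero {d : Fin 0 → ℕ} (ρ : ∀ j, Matrix (Fin (d j)) (Fin (d j)) ℂ) :
    tensorProdMatrix ρ = 1 := by
  ext a b
  rw [Subsingleton.elim a b]
  simp [tensorProdMatrix]

theorem tensorProdMatrix_succ {n : ℕ} {d : Fin (n + 1) → ℕ}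
    (ρ : ∀ j, Matrix (Fin (d j)) (Fin (d j)) ℂ) :
    tensorProdMatrix ρ = (ρ 0 ⊗ₖ tensorProdMatrix (fun j => ρ j.succ)).submatrix
      (Fin.consEquiv (fun j => Fin (d j))).symm (Fin.consEquiv (fun j => Fin (d j))).symm := by
  ext a b
  simp [tensorProdMatrix, Fin.consEquiv, Fin.tail, Fin.prod_univ_succ]

theorem posSemidef_tensorProdMatrix {n : ℕ} {d : Fin n → ℕ}
    {ρ : ∀ j, Matrix (Fin (d j)) (Fin (d j)) ℂ} (hρ : ∀ j, (ρ j).PosSemidef) :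
    (tensorProdMatrix ρ).PosSemidef := by
  induction n with
  | zero => exact tensorProdMatrix_zero ρ ▸ PosSemidef.one
  | succ k ih =>
    rw [tensorProdMatrix_succ]
    exact ((hρ 0).kronecker (ih fun j => hρ j.succ)).submatrix _

theorem trace_tensorProdMatrix {n : ℕ} {d : Fin n → ℕ}
    (ρ : ∀ j, Matrix (Fin (d j)) (Fin (d j)) ℂ) :
    (tensorProdMatrix ρ).trace = ∏ j, (ρ j).trace := by
  induction n with
  | zero => simp [tensorProdMatrix_zero]
  | succ k ih =>
    rw [tensorProdMatrix_succ, trace_submatrix_equiv, trace_kronecker, ih, Fin.prod_univ_succ]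

/-- Telescoping bound: the trace distance between tensor products of density matrices is
at most the sum of the local trace distances. -/
theorem traceNorm_tensorProd_sub_tensorProd_le (n : ℕ) (d : Fin n → ℕ)
    (ρ σ : ∀ j, Matrix (Fin (d j)) (Fin (d j)) ℂ)
    (hρ : ∀ j, (ρ j).PosSemidef) (hρtr : ∀ j, (ρ j).trace = 1)
    (hσ : ∀ j, (σ j).PosSemidef) (hσtr : ∀ j, (σ j).trace = 1) :
    traceNorm (tensorProdMatrix ρ - tensorProdMatrix σ) ≤
      ∑ j, traceNorm (ρ j - σ j) := by
  induction n with
  | zero => simp [tensorProdMatrix_zero, traceNorm_zero]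
  | succ k ih =>
    set P := tensorProdMatrix fun j => ρ j.succ
    set Q := tensorProdMatrix fun j => σ j.succ
    have hreindex : traceNorm (tensorProdMatrix ρ - tensorProdMatrix σ) =
        traceNorm (ρ 0 ⊗ₖ P - σ 0 ⊗ₖ Q) := by
      rw [tensorProdMatrix_succ ρ, tensorProdMatrix_succ σ,
        ← traceNorm_submatrix (ρ 0 ⊗ₖ P - σ 0 ⊗ₖ Q) (Fin.consEquiv fun j => Fin (d j)).symm]
      rfl
    have hPQ : traceNorm (P - Q) ≤ ∑ j : Fin k, traceNorm (ρ j.succ - σ j.succ) :=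
      ih _ _ _ (fun j => hρ j.succ) (fun j => hρtr j.succ) (fun j => hσ j.succ)
        (fun j => hσtr j.succ)
    have hPtr : P.trace = 1 := by simp [P, trace_tensorProdMatrix, hρtr]
    rw [hreindex, Fin.sum_univ_succ]
    refine (traceNorm_kronecker_sub_kronecker_le (hρ 0).1 (hσ 0) (hσtr 0)
      (posSemidef_tensorProdMatrix fun j => hρ j.succ) hPtr
      (posSemidef_tensorProdMatrix fun j => hσ j.succ).1).trans ?_
    gcongr
end

section
/- Let n be a natural number, d : Fin n → ℕ, and let X be a complex matrix indexed by (∀ j, Fin (d j)) × (∀ j, Fin (d j)). Let A₀ ⊆ Fin n be a set of coordinates, and define the partial transpose X^{T_{A₀}} by X^{T_{A₀}} a b = X a' b', where a' j = b j and b' j = a j for j ∈ A₀, and a' j = a j, b' j = b j for j ∉ A₀. Then for every family of vectors u : ∀ j, (Fin (d j) → ℂ) with Σ_i |u j i|² = 1 for each j, defining the product vector Ψ a = Π_j u j (a j), one has | Σ_{a,b} conj (Ψ a) · X a b · Ψ b | ≤ ‖X^{T_{A₀}}‖, where ‖·‖ denotes the ℓ²-operator norm. -/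
/-!
Reindexing the double sum by the involution that exchanges the `A₀`-coordinates of `a` and `b`
turns `⟨Ψ, X Ψ⟩` into `⟨Φ, X^{T_{A₀}} Φ⟩`, where `Φ` is the product vector whose local factors
on `A₀` are conjugated. Conjugation preserves the local norms, so `Φ` is again a unit vector and
Cauchy–Schwarz bounds `|⟨Φ, X^{T_{A₀}} Φ⟩|` by the operator norm.
-/

/-- The partial transpose of a matrix `X` on the tensor product `⊗_j ℂ^(d j)` with respect
to the set of coordinates `A₀`: indices in `A₀` are transposed, the others are left alone. -/
def partialTranspose {n : ℕ} {d : Fin n → ℕ}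
    (X : Matrix (∀ j, Fin (d j)) (∀ j, Fin (d j)) ℂ) (A₀ : Finset (Fin n)) :
    Matrix (∀ j, Fin (d j)) (∀ j, Fin (d j)) ℂ :=
  Matrix.of fun a b =>
    X (fun j => if j ∈ A₀ then b j else a j) (fun j => if j ∈ A₀ then a j else b j)

open Finset ComplexConjugate

section TensorVec

variable {R : Type*} {ι : Type*} {κ : ι → Type*}

def tensorVec [CommMonoid R] [Fintype ι] (u : ∀ j, κ j → R) : (∀ j, κ j) → R :=
  fun a => ∏ j, u j (a j)

theorem sum_norm_sq_tensorVec [SeminormedCommRing R] [NormMulClass R] [NormOneClass R]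
    [Fintype ι] [DecidableEq ι] [∀ j, Fintype (κ j)] (u : ∀ j, κ j → R) :
    ∑ a, ‖tensorVec u a‖ ^ 2 = ∏ j, ∑ i, ‖u j i‖ ^ 2 := by
  simp only [tensorVec, norm_prod, ← prod_pow]
  exact (Fintype.prod_sum fun j i => ‖u j i‖ ^ 2).symm

def piecewiseSwap (s : Finset ι) [∀ j, Decidable (j ∈ s)] (p : (∀ j, κ j) × (∀ j, κ j)) :
    (∀ j, κ j) × (∀ j, κ j) :=
  (s.piecewise p.2 p.1, s.piecewise p.1 p.2)

theorem piecewiseSwap_involutive (s : Finset ι) [∀ j, Decidable (j ∈ s)] :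
    Function.Involutive (piecewiseSwap (κ := κ) s) := fun p => by
  simp [piecewiseSwap, piecewise_same]

theorem conj_tensorVec_mul_tensorVec_piecewiseSwap [CommSemiring R] [StarRing R] [Fintype ι]
    (s : Finset ι) [∀ j, Decidable (j ∈ s)] (u : ∀ j, κ j → R) (p : (∀ j, κ j) × (∀ j, κ j)) :
    conj (tensorVec (s.piecewise (star u) u) (piecewiseSwap s p).1) *
        tensorVec (s.piecewise (star u) u) (piecewiseSwap s p).2 =
      conj (tensorVec u p.1) * tensorVec u p.2 := by
  simp only [tensorVec, piecewiseSwap, map_prod, ← prod_mul_distrib]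
  refine prod_congr rfl fun j _ => ?_
  by_cases hj : j ∈ s <;> simp [hj, starRingEnd_apply, mul_comm]

end TensorVec

theorem norm_sum_sum_conj_mul_mul_le {𝕜 ι : Type*} [RCLike 𝕜] [Fintype ι] [DecidableEq ι]
    (M : Matrix ι ι 𝕜) (v : ι → 𝕜) :
    ‖∑ a, ∑ b, conj (v a) * M a b * v b‖ ≤
      ‖(Matrix.toEuclideanLin M).toContinuousLinearMap‖ * ∑ a, ‖v a‖ ^ 2 := by
  set T := (Matrix.toEuclideanLin M).toContinuousLinearMap
  set w := WithLp.toLp 2 v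
  have hinner : ∑ a, ∑ b, conj (v a) * M a b * v b = inner 𝕜 w (T w) := by
    simp only [EuclideanSpace.inner_toLp_toLp, T, w, LinearMap.coe_toContinuousLinearMap',
      Matrix.toLpLin_toLp, Matrix.toLin'_apply, dotProduct, Matrix.mulVec, sum_mul,
      Pi.star_apply, RCLike.star_def]
    exact sum_congr rfl fun a _ => sum_congr rfl fun b _ => by ring
  calc ‖∑ a, ∑ b, conj (v a) * M a b * v b‖
      ≤ ‖w‖ * ‖T w‖ := hinner ▸ norm_inner_le_norm _ _
    _ ≤ ‖w‖ * (‖T‖ * ‖w‖) := by gcongr; exact T.le_opNorm _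
    _ = ‖T‖ * ∑ a, ‖v a‖ ^ 2 := by rw [← EuclideanSpace.norm_sq_eq]; ring

theorem sum_sum_conj_mul_partialTranspose_mul {n : ℕ} {d : Fin n → ℕ}
    (X : Matrix (∀ j, Fin (d j)) (∀ j, Fin (d j)) ℂ) (A₀ : Finset (Fin n))
    (u : ∀ j, Fin (d j) → ℂ) :
    ∑ a, ∑ b, conj (tensorVec (A₀.piecewise (star u) u) a) * partialTranspose X A₀ a b *
        tensorVec (A₀.piecewise (star u) u) b =
      ∑ a, ∑ b, conj (tensorVec u a) * X a b * tensorVec u b := by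
  set σ := (piecewiseSwap_involutive (κ := fun j => Fin (d j)) A₀).toPerm
  have hX (p) : partialTranspose X A₀ p.1 p.2 = X (σ p).1 (σ p).2 := rfl
  rw [← Fintype.sum_prod_type', ← Fintype.sum_prod_type', ← Equiv.sum_comp σ]
  refine Fintype.sum_congr _ _ fun p => ?_
  rw [hX, Function.Involutive.coe_toPerm, piecewiseSwap_involutive]
  linear_combination X p.1 p.2 * conj_tensorVec_mul_tensorVec_piecewiseSwap A₀ u p

/-- The cross norm is bounded by the ℓ²-operator norm of any partial transpose: for every
family of local unit vectors `u`, with product vector `Ψ a = ∏ j, u j (a j)`, one has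
`|Σ_{a,b} conj (Ψ a) · X a b · Ψ b| ≤ ‖X^{T_{A₀}}‖`. -/
theorem crossNorm_le_opNorm_partialTranspose (n : ℕ) (d : Fin n → ℕ)
    (X : Matrix (∀ j, Fin (d j)) (∀ j, Fin (d j)) ℂ) (A₀ : Finset (Fin n))
    (u : ∀ j, Fin (d j) → ℂ) (hu : ∀ j, ∑ i, ‖u j i‖ ^ 2 = 1) :
    ‖∑ a, ∑ b,
        starRingEnd ℂ (∏ j, u j (a j)) * X a b * (∏ j, u j (b j))‖ ≤
      ‖LinearMap.toContinuousLinearMap (Matrix.toEuclideanLin (partialTranspose X A₀))‖ := by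
  have hunit : ∀ j, ∑ i, ‖A₀.piecewise (star u) u j i‖ ^ 2 = 1 := fun j => by
    by_cases hj : j ∈ A₀ <;> simp [hj, hu]
  calc ‖∑ a, ∑ b, conj (∏ j, u j (a j)) * X a b * ∏ j, u j (b j)‖
      = ‖∑ a, ∑ b, conj (tensorVec (A₀.piecewise (star u) u) a) * partialTranspose X A₀ a b *
          tensorVec (A₀.piecewise (star u) u) b‖ := by
        rw [sum_sum_conj_mul_partialTranspose_mul]; rfl
    _ ≤ _ * ∑ a, ‖tensorVec (A₀.piecewise (star u) u) a‖ ^ 2 := norm_sum_sum_conj_mul_mul_le _ _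
    _ = _ := by rw [sum_norm_sq_tensorVec, prod_eq_one fun j _ => hunit j, mul_one]
end
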